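/- arXiv:1601.00811 — 7 statements merged into one kernel-verified Lean document; each statement's English description precedes it below -/
import Mathlib

section
/- For λ > 0, μ > 0, d ≥ 0, y ∈ ℝ and v₀ ∈ ℝ, every minimizer of v ↦ λ·1_{v≠0} + (μ/2)(v − y)² + (d/2)(v − v₀)² equals the hard threshold T_{√(2λ/(μ+d))}((μy + d v₀)/(μ+d)) (with either value allowed at the threshold boundary). -/
/-!
Completing the square, `(μ/2)(v - y)² + (d/2)(v - v₀)²` equals `((μ + d)/2)(v - b)²` plus a
constant, with `b = (μ y + d v₀)/(μ + d)`. A minimizer `v⋆` of `λ·1_{v≠0} + (c/2)(v - b)²` is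
either `0` or `b`: if `v⋆ ≠ 0`, comparing with `v = b` forces `v⋆ = b`. Comparing the two
candidates, `0` costs `(c/2) b²` and `b` costs `λ`, so which one wins depends on the sign of
`b² - 2λ/c`.
-/

namespace HardThreshold

noncomputable def objective (lam c b v : ℝ) : ℝ :=
  lam * (if v ≠ 0 then 1 else 0) + c / 2 * (v - b) ^ 2

variable {lam c b vstar : ℝ}

theorem eq_zero_or_eq_of_isMinimizer (hlam : 0 ≤ lam) (hc : 0 < c)
    (hmin : ∀ v, objective lam c b vstar ≤ objective lam c b v) :
    vstar = 0 ∨ vstar = b := by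
  refine or_iff_not_imp_left.2 fun hv => ?_
  have hb : objective lam c b vstar ≤ objective lam c b b := hmin b
  have hind : lam * (if b ≠ 0 then 1 else 0) ≤ lam := by split_ifs <;> linarith
  simp only [objective, hv, ne_eq, not_false_eq_true, if_true, sub_self] at hb
  have : (vstar - b) ^ 2 = 0 := by nlinarith [sq_nonneg (vstar - b)]
  exact sub_eq_zero.1 (pow_eq_zero_iff two_ne_zero |>.1 this)

theorem abs_le_sqrt_of_isMinimizer_zero (hlam : 0 ≤ lam) (hc : 0 < c)
    (hmin : ∀ v, objective lam c b 0 ≤ objective lam c b v) :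
    |b| ≤ Real.sqrt (2 * lam / c) := by
  have hb : objective lam c b 0 ≤ objective lam c b b := hmin b
  have hind : lam * (if b ≠ 0 then 1 else 0) ≤ lam := by split_ifs <;> linarith
  simp only [objective, ne_eq, not_true_eq_false, if_false, sub_self] at hb
  refine Real.abs_le_sqrt ?_
  rw [le_div_iff₀ hc]
  nlinarith

theorem sqrt_le_abs_of_isMinimizer_ne_zero (hlam : 0 ≤ lam) (hc : 0 < c) (hv : vstar ≠ 0)
    (hmin : ∀ v, objective lam c b vstar ≤ objective lam c b v) :
    Real.sqrt (2 * lam / c) ≤ |b| := by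
  obtain rfl : vstar = b := (eq_zero_or_eq_of_isMinimizer hlam hc hmin).resolve_left hv
  have h0 : objective lam c vstar vstar ≤ objective lam c vstar 0 := hmin 0
  simp only [objective, hv, ne_eq, not_false_eq_true, not_true_eq_false, if_true,
    if_false, sub_self] at h0
  rw [← Real.sqrt_sq_eq_abs]
  refine Real.sqrt_le_sqrt ?_
  rw [div_le_iff₀ hc]
  nlinarith

theorem isHardThreshold_of_isMinimizer (hlam : 0 ≤ lam) (hc : 0 < c)
    (hmin : ∀ v, objective lam c b vstar ≤ objective lam c b v) :
    (|b| < Real.sqrt (2 * lam / c) → vstar = 0) ∧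
    (Real.sqrt (2 * lam / c) < |b| → vstar = b) ∧
    (|b| = Real.sqrt (2 * lam / c) → vstar = 0 ∨ vstar = b) := by
  refine ⟨fun hlt => ?_, fun hgt => ?_, fun _ => eq_zero_or_eq_of_isMinimizer hlam hc hmin⟩
  · by_contra hv
    exact (sqrt_le_abs_of_isMinimizer_ne_zero hlam hc hv hmin).not_gt hlt
  · refine (eq_zero_or_eq_of_isMinimizer hlam hc hmin).resolve_left fun hv => ?_
    subst hv
    exact (abs_le_sqrt_of_isMinimizer_zero hlam hc hmin).not_gt hgt

end HardThreshold

/-- Every minimizer of `v ↦ λ·1_{v≠0} + (μ/2)(v−y)² + (d/2)(v−v₀)²` is the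
hard threshold of `(μy + d v₀)/(μ+d)` at level `√(2λ/(μ+d))`. -/
theorem stmt_2 (lam mu d y v0 vstar : ℝ) (hlam : 0 < lam) (hmu : 0 < mu) (hd : 0 ≤ d)
    (hmin : ∀ v : ℝ,
      lam * (if vstar ≠ 0 then 1 else 0) + mu / 2 * (vstar - y) ^ 2 + d / 2 * (vstar - v0) ^ 2 ≤
        lam * (if v ≠ 0 then 1 else 0) + mu / 2 * (v - y) ^ 2 + d / 2 * (v - v0) ^ 2) :
    (|((mu * y + d * v0) / (mu + d))| < Real.sqrt (2 * lam / (mu + d)) → vstar = 0) ∧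
    (Real.sqrt (2 * lam / (mu + d)) < |((mu * y + d * v0) / (mu + d))| →
      vstar = (mu * y + d * v0) / (mu + d)) ∧
    (|((mu * y + d * v0) / (mu + d))| = Real.sqrt (2 * lam / (mu + d)) →
      vstar = 0 ∨ vstar = (mu * y + d * v0) / (mu + d)) := by
  have hc : 0 < mu + d := by linarith
  set b := (mu * y + d * v0) / (mu + d)
  have complete_square : ∀ v : ℝ, mu / 2 * (v - y) ^ 2 + d / 2 * (v - v0) ^ 2 =
      (mu + d) / 2 * (v - b) ^ 2 + ((mu * y ^ 2 + d * v0 ^ 2) / 2 - (mu + d) / 2 * b ^ 2) := by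
    intro v
    have hb : b * (mu + d) = mu * y + d * v0 := div_mul_cancel₀ _ hc.ne'
    linear_combination v * hb
  refine HardThreshold.isHardThreshold_of_isMinimizer hlam.le hc fun v => ?_
  have h := hmin v
  simp only [HardThreshold.objective]
  linarith [complete_square v, complete_square vstar]
end

section
/- Let A ∈ ℝ^{n×n} and suppose A = XΣYᵀ is a singular value decomposition with X, Y orthogonal and Σ diagonal with nonnegative entries. Then D = XYᵀ is a maximizer of the trace functional D ↦ tr(DᵀA) over all orthogonal matrices D ∈ ℝ^{n×n}. -/
open Matrix

lemma diag_le_one' {n : ℕ} (M : Matrix (Fin n) (Fin n) ℝ) (h : M * Mᵀ = 1) (i : Fin n) :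
    M i i ≤ 1 := by
  have h1 : ∑ j, M i j * M i j = 1 := by
    have := congrFun (congrFun h i) i
    simpa [Matrix.mul_apply, Matrix.one_apply] using this
  have h2 : M i i * M i i ≤ 1 := by
    calc M i i * M i i ≤ ∑ j, M i j * M i j :=
          Finset.single_le_sum (f := fun j => M i j * M i j)
            (fun j _ => mul_self_nonneg _) (Finset.mem_univ i)
      _ = 1 := h1
  nlinarith

lemma trace_mul_diag' {n : ℕ} (N S : Matrix (Fin n) (Fin n) ℝ)
    (hS : ∀ i j, i ≠ j → S i j = 0) :
    Matrix.trace (N * S) = ∑ i, N i i * S i i := by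
  simp only [Matrix.trace, Matrix.diag, Matrix.mul_apply]
  refine Finset.sum_congr rfl fun i _ => ?_
  exact Finset.sum_eq_single i (fun j _ hj => by rw [hS j i hj, mul_zero]) (by simp)

/-- Orthogonal Procrustes: if `A = X Σ Yᵀ` is an SVD, then `D = X Yᵀ` maximizes
`D ↦ tr(Dᵀ A)` over orthogonal matrices. -/
theorem stmt_3 {n : ℕ} (A X Y S : Matrix (Fin n) (Fin n) ℝ)
    (hX : Xᵀ * X = 1) (hY : Yᵀ * Y = 1)
    (hS : ∀ i j, i ≠ j → S i j = 0) (hSpos : ∀ i, 0 ≤ S i i)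
    (hA : A = X * S * Yᵀ) :
    ∀ D : Matrix (Fin n) (Fin n) ℝ, Dᵀ * D = 1 →
      Matrix.trace (Dᵀ * A) ≤ Matrix.trace ((X * Yᵀ)ᵀ * A) := by
  have hXX : X * Xᵀ = 1 := mul_eq_one_comm.mp hX
  -- key computation of the trace for any D
  have key : ∀ D : Matrix (Fin n) (Fin n) ℝ,
      Matrix.trace (Dᵀ * A) = ∑ i, (Yᵀ * Dᵀ * X) i i * S i i := by
    intro D
    have h1 : Dᵀ * A = (Dᵀ * X * S) * Yᵀ := by
      rw [hA]; noncomm_ring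
    rw [h1, Matrix.trace_mul_comm, ← Matrix.mul_assoc, ← Matrix.mul_assoc]
    exact trace_mul_diag' _ _ hS
  intro D hD
  rw [key D, key (X * Yᵀ)]
  have hM1 : Yᵀ * (X * Yᵀ)ᵀ * X = 1 := by
    rw [Matrix.transpose_mul, Matrix.transpose_transpose, ← Matrix.mul_assoc,
      hY, Matrix.one_mul, hX]
  rw [hM1]
  have hMorth : (Yᵀ * Dᵀ * X) * (Yᵀ * Dᵀ * X)ᵀ = 1 := by
    simp only [Matrix.transpose_mul, Matrix.transpose_transpose, Matrix.mul_assoc]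
    rw [← Matrix.mul_assoc X Xᵀ, hXX, Matrix.one_mul, ← Matrix.mul_assoc Dᵀ D, hD,
      Matrix.one_mul, hY]
  refine Finset.sum_le_sum fun i _ => ?_
  have := diag_le_one' _ hMorth i
  simpa using mul_le_of_le_one_left (hSpos i) this
end

section
/- Let W = [S_{a₀(−·)}ᵀ, …, S_{a_m(−·)}ᵀ]ᵀ be the analysis operator on ℓ₂(ℤ) built from finitely supported filters a₀,…,a_m via convolution operators S_a u = a ∗ u. Then WᵀW = I holds if and only if Σ_{j=0}^{m} |â_j(ξ)|² = 1 for all ξ ∈ [−π, π], where â_j denotes the Fourier series of a_j. -/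
open Finset Pointwise

/-- Difference set of supports, together with 0. -/
noncomputable def uepD (m : ℕ) (a : Fin (m + 1) → ℤ → ℝ)
    (hfin : ∀ j, (Function.support (a j)).Finite) : Finset ℤ :=
  insert 0 (Finset.univ.biUnion fun j => (hfin j).toFinset - (hfin j).toFinset)

lemma uep_key (m : ℕ) (a : Fin (m + 1) → ℤ → ℝ)
    (hfin : ∀ j, (Function.support (a j)).Finite)
    {M : Type*} [AddCommMonoid M] [Module ℝ M] (φ : ℤ → M) :
    ∑ j, ∑ k ∈ (hfin j).toFinset, ∑ l ∈ (hfin j).toFinset,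
        (a j k * a j l) • φ (l - k)
      = ∑ d ∈ uepD m a hfin,
          (∑ j, ∑ k ∈ (hfin j).toFinset, a j (d + k) * a j k) • φ d := by
  have step1 : (∑ d ∈ uepD m a hfin,
      (∑ j, ∑ k ∈ (hfin j).toFinset, a j (d + k) * a j k) • φ d)
      = ∑ j, ∑ k ∈ (hfin j).toFinset, ∑ d ∈ uepD m a hfin,
          (a j (d + k) * a j k) • φ d := by
    simp only [Finset.sum_smul]
    rw [Finset.sum_comm]
    exact Finset.sum_congr rfl fun j _ => Finset.sum_comm
  rw [step1]
  refine Finset.sum_congr rfl fun j _ => Finset.sum_congr rfl fun k hk => ?_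
  have hinj : ∀ x ∈ (hfin j).toFinset, ∀ y ∈ (hfin j).toFinset,
      x - k = y - k → x = y := fun x _ y _ h => by omega
  have himg : (∑ l ∈ (hfin j).toFinset, (a j k * a j l) • φ (l - k))
      = ∑ d ∈ (hfin j).toFinset.image (fun l => l - k),
          (a j (d + k) * a j k) • φ d := by
    rw [Finset.sum_image hinj]
    refine Finset.sum_congr rfl fun l _ => ?_
    rw [show l - k + k = l by ring, mul_comm]
  rw [himg]
  refine Finset.sum_subset ?_ ?_
  · intro d hd
    simp only [Finset.mem_image] at hd
    obtain ⟨l, hl, rfl⟩ := hd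
    refine Finset.mem_insert_of_mem (Finset.mem_biUnion.2 ⟨j, Finset.mem_univ _, ?_⟩)
    exact Finset.mem_sub.2 ⟨l, hl, k, hk, rfl⟩
  · intro d _ hd
    have hz : a j (d + k) = 0 := by
      by_contra h
      refine hd (Finset.mem_image.2 ⟨d + k, ?_, by ring⟩)
      simpa [Function.mem_support] using h
    simp [hz]

lemma uep_integral (n : ℤ) :
    ∫ ξ : ℝ in (-Real.pi)..Real.pi, Complex.exp (Complex.I * n * ξ)
      = if n = 0 then (2 * Real.pi : ℂ) else 0 := by
  rcases eq_or_ne n 0 with rfl | hn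
  · simp [intervalIntegral.integral_const]
    ring
  · have hc : (Complex.I * (n : ℂ)) ≠ 0 := by
      simp [Complex.I_ne_zero, Complex.ext_iff]
      exact_mod_cast hn
    have := integral_exp_mul_complex (a := -Real.pi) (b := Real.pi) hc
    simp only [mul_assoc] at this ⊢
    rw [this, if_neg hn]
    have h1 : Complex.I * ((n : ℂ) * (Real.pi : ℂ)) = (n : ℂ) * (Real.pi * Complex.I) := by ring
    have h2 : Complex.I * ((n : ℂ) * ((-Real.pi : ℝ) : ℂ)) = (-n : ℤ) * (Real.pi * Complex.I) := by
      push_cast; ring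
    rw [h1, h2, Complex.exp_int_mul, Complex.exp_int_mul]
    have hsq : (Complex.exp (Real.pi * Complex.I)) ^ (2 : ℤ) = 1 := by
      rw [Complex.exp_pi_mul_I]; norm_num
    have : Complex.exp (Real.pi * Complex.I) ^ (-n : ℤ)
        = Complex.exp (Real.pi * Complex.I) ^ (n : ℤ) := by
      have hmul : Complex.exp (Real.pi * Complex.I) ^ (n : ℤ)
          * Complex.exp (Real.pi * Complex.I) ^ (n : ℤ) = 1 := by
        rw [← zpow_add₀ (Complex.exp_ne_zero _), show n + n = 2 * n by ring,
          zpow_mul, hsq, one_zpow]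
      rw [zpow_neg, inv_eq_of_mul_eq_one_left hmul]
    rw [this, sub_self, zero_div]

/-- UEP-type characterization: the analysis operator built from finitely
supported filters `a₀, …, a_m` satisfies `WᵀW = I` on `ℓ₂(ℤ)` if and only if
`Σⱼ |âⱼ(ξ)|² = 1` for all `ξ ∈ [−π, π]`. -/
theorem stmt_7 (m : ℕ) (a : Fin (m + 1) → ℤ → ℝ)
    (hfin : ∀ j, (Function.support (a j)).Finite) :
    (∀ u : lp (fun _ : ℤ => ℝ) 2, ∀ n : ℤ,
        ∑ j, ∑' k : ℤ, a j (n - k) * (∑' l : ℤ, a j (l - k) * u l) = u n) ↔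
      (∀ ξ ∈ Set.Icc (-Real.pi) Real.pi,
        ∑ j, Complex.normSq
            (∑' k : ℤ, (a j k : ℂ) * Complex.exp (-Complex.I * (k : ℂ) * (ξ : ℂ))) = 1) := by
  classical
  set b : ℤ → ℝ := fun d => ∑ j, ∑ k ∈ (hfin j).toFinset, a j (d + k) * a j k with hb
  have hvan : ∀ j k, k ∉ (hfin j).toFinset → a j k = 0 := by
    intro j k hk
    by_contra h
    exact hk (by simpa [Function.mem_support] using h)
  have hD0 : (0 : ℤ) ∈ uepD m a hfin := Finset.mem_insert_self _ _
  have hbD : ∀ d ∉ uepD m a hfin, b d = 0 := by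
    intro d hd
    refine Finset.sum_eq_zero fun j _ => Finset.sum_eq_zero fun k hk => ?_
    rcases eq_or_ne (a j (d + k)) 0 with h | h
    · simp [h]
    · exact absurd (Finset.mem_insert_of_mem (Finset.mem_biUnion.2 ⟨j, Finset.mem_univ _,
        Finset.mem_sub.2 ⟨d + k, by simpa [Function.mem_support] using h, k, hk, by ring⟩⟩)) hd
  -- the master frequency identity
  have hmaster : ∀ ξ : ℝ,
      ((∑ j, Complex.normSq
        (∑' k : ℤ, (a j k : ℂ) * Complex.exp (-Complex.I * (k : ℂ) * (ξ : ℂ))) : ℝ) : ℂ)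
      = ∑ d ∈ uepD m a hfin, (b d) • Complex.exp (Complex.I * (d : ℂ) * (ξ : ℝ)) := by
    intro ξ
    rw [Complex.ofReal_sum]
    have hFsum : ∀ j, (∑' k : ℤ, (a j k : ℂ) * Complex.exp (-Complex.I * (k : ℂ) * (ξ : ℂ)))
        = ∑ k ∈ (hfin j).toFinset, (a j k : ℂ) * Complex.exp (-Complex.I * (k : ℂ) * (ξ : ℂ)) :=
      fun j => tsum_eq_sum fun k hk => by simp [hvan j k hk]
    have hns : ∀ j, ((Complex.normSq
        (∑' k : ℤ, (a j k : ℂ) * Complex.exp (-Complex.I * (k : ℂ) * (ξ : ℂ))) : ℝ) : ℂ)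
        = ∑ k ∈ (hfin j).toFinset, ∑ l ∈ (hfin j).toFinset,
            (a j k * a j l) • Complex.exp (Complex.I * ((l - k : ℤ) : ℂ) * (ξ : ℝ)) := by
      intro j
      rw [← Complex.mul_conj, hFsum j, map_sum, Finset.sum_mul_sum]
      refine Finset.sum_congr rfl fun k _ => Finset.sum_congr rfl fun l _ => ?_
      rw [map_mul, Complex.conj_ofReal, ← Complex.exp_conj]
      have hc : (starRingEnd ℂ) (-Complex.I * (l : ℂ) * (ξ : ℂ))
          = Complex.I * (l : ℂ) * (ξ : ℂ) := by
        simp only [map_mul, map_neg, Complex.conj_I, Complex.conj_ofReal, map_intCast]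
        ring
      rw [hc]
      calc ((a j k : ℂ) * Complex.exp (-Complex.I * (k : ℂ) * (ξ : ℂ)))
            * ((a j l : ℂ) * Complex.exp (Complex.I * (l : ℂ) * (ξ : ℂ)))
          = ((a j k : ℂ) * (a j l : ℂ))
            * Complex.exp (-Complex.I * (k : ℂ) * (ξ : ℂ) + Complex.I * (l : ℂ) * (ξ : ℂ)) := by
            rw [Complex.exp_add]; ring
        _ = _ := by
            rw [Complex.real_smul]
            push_cast
            rw [show -Complex.I * (k : ℂ) * (ξ : ℂ) + Complex.I * (l : ℂ) * (ξ : ℂ)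
              = Complex.I * ((l : ℂ) - (k : ℂ)) * (ξ : ℂ) by ring]
    simp only [hns]
    exact uep_key m a hfin (fun d => Complex.exp (Complex.I * (d : ℂ) * (ξ : ℝ)))
  -- the time-domain condition is equivalent to b = δ
  have htime : (∀ u : lp (fun _ : ℤ => ℝ) 2, ∀ n : ℤ,
      ∑ j, ∑' k : ℤ, a j (n - k) * (∑' l : ℤ, a j (l - k) * u l) = u n)
      ↔ ∀ d : ℤ, b d = if d = 0 then 1 else 0 := by
    constructor
    · intro H d
      have husingle : ∀ l : ℤ,
          ((lp.single 2 (0 : ℤ) (1 : ℝ) : lp (fun _ : ℤ => ℝ) 2) : ∀ _ : ℤ, ℝ) l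
          = if l = 0 then 1 else 0 := by
        intro l
        rw [lp.single_apply]
        rcases eq_or_ne l 0 with rfl | h
        · simp
        · simp [h]
      have hu := H (lp.single 2 (0 : ℤ) (1 : ℝ)) d
      have hinner : ∀ j (k : ℤ),
          (∑' l : ℤ, a j (l - k)
            * ((lp.single 2 (0 : ℤ) (1 : ℝ) : lp (fun _ : ℤ => ℝ) 2) : ∀ _ : ℤ, ℝ) l)
          = a j (-k) := by
        intro j k
        rw [tsum_eq_single 0 (fun l hl => by simp [husingle, hl])]
        simp [husingle]
      simp only [hinner, husingle d] at hu
      have hre : ∀ j, (∑' k : ℤ, a j (d - k) * a j (-k))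
          = ∑ k ∈ (hfin j).toFinset, a j (d + k) * a j k := by
        intro j
        rw [← (Equiv.neg ℤ).tsum_eq (fun k => a j (d - k) * a j (-k))]
        simp only [Equiv.neg_apply, sub_neg_eq_add, neg_neg]
        exact tsum_eq_sum fun k hk => by simp [hvan j k hk]
      calc b d = ∑ j, ∑' k : ℤ, a j (d - k) * a j (-k) :=
            (Finset.sum_congr rfl fun j _ => (hre j).symm)
        _ = if d = 0 then 1 else 0 := hu
    · intro hbδ u n
      have hinner : ∀ j (k : ℤ), (∑' l : ℤ, a j (l - k) * u l)
          = ∑ l ∈ (hfin j).toFinset, a j l * u (l + k) := by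
        intro j k
        rw [← (Equiv.addRight k).tsum_eq (fun l => a j (l - k) * u l)]
        simp only [Equiv.coe_addRight, add_sub_cancel_right]
        exact tsum_eq_sum fun l hl => by simp [hvan j l hl]
      have houter : ∀ j : Fin (m + 1),
          (∑' k : ℤ, a j (n - k) * (∑' l : ℤ, a j (l - k) * u l))
          = ∑ k ∈ (hfin j).toFinset, ∑ l ∈ (hfin j).toFinset,
              (a j k * a j l) • (u (n + (l - k)) : ℝ) := by
        intro j
        simp only [hinner]
        rw [← (Equiv.subLeft n).tsum_eq
          (fun k => a j (n - k) * ∑ l ∈ (hfin j).toFinset, a j l * u (l + k))]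
        simp only [Equiv.subLeft_apply, sub_sub_cancel]
        rw [tsum_eq_sum (s := (hfin j).toFinset) (fun k hk => by simp [hvan j k hk])]
        refine Finset.sum_congr rfl fun k _ => ?_
        rw [Finset.mul_sum]
        refine Finset.sum_congr rfl fun l _ => ?_
        rw [smul_eq_mul, show l + (n - k) = n + (l - k) by ring]
        ring
      simp only [houter]
      rw [uep_key m a hfin (fun d => (u (n + d) : ℝ))]
      have : ∀ d ∈ uepD m a hfin,
          (∑ j, ∑ k ∈ (hfin j).toFinset, a j (d + k) * a j k) • (u (n + d) : ℝ)
          = if d = 0 then (u (n + d) : ℝ) else 0 := by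
        intro d _
        rw [show (∑ j, ∑ k ∈ (hfin j).toFinset, a j (d + k) * a j k) = b d from rfl, hbδ d]
        split <;> simp
      rw [Finset.sum_congr rfl this, Finset.sum_ite_eq' (uepD m a hfin) 0
        (fun d => (u (n + d) : ℝ)), if_pos hD0, add_zero]
  rw [htime]
  constructor
  · intro hbδ ξ hξ
    have h1 : (∑ d ∈ uepD m a hfin, (b d) • Complex.exp (Complex.I * (d : ℂ) * (ξ : ℝ)))
        = 1 := by
      have : ∀ d ∈ uepD m a hfin,
          (b d) • Complex.exp (Complex.I * (d : ℂ) * (ξ : ℝ))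
          = if d = 0 then Complex.exp (Complex.I * (d : ℂ) * (ξ : ℝ)) else 0 := by
        intro d _
        rw [hbδ d]
        split <;> simp
      rw [Finset.sum_congr rfl this, Finset.sum_ite_eq' (uepD m a hfin) 0
        (fun d => Complex.exp (Complex.I * (d : ℂ) * (ξ : ℝ))), if_pos hD0]
      simp
    have := (hmaster ξ).trans h1
    exact_mod_cast this
  · intro hfreq d0
    have hξ : ∀ ξ ∈ Set.Icc (-Real.pi) Real.pi,
        (∑ d ∈ uepD m a hfin, (b d) • Complex.exp (Complex.I * (d : ℂ) * (ξ : ℝ))) = 1 := by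
      intro ξ hξ
      rw [← hmaster ξ, hfreq ξ hξ]
      norm_num
    -- integrate against exp(I * (-d0) * ξ)
    have hinteq : (∫ ξ : ℝ in (-Real.pi)..Real.pi,
        (∑ d ∈ uepD m a hfin, (b d) • Complex.exp (Complex.I * (d : ℂ) * (ξ : ℝ)))
          * Complex.exp (Complex.I * ((-d0 : ℤ) : ℂ) * (ξ : ℝ)))
        = ∫ ξ : ℝ in (-Real.pi)..Real.pi, Complex.exp (Complex.I * ((-d0 : ℤ) : ℂ) * (ξ : ℝ)) := by
      apply intervalIntegral.integral_congr
      intro ξ hmem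
      rw [Set.uIcc_of_le (by linarith [Real.pi_pos])] at hmem
      simp only [hξ ξ hmem, one_mul]
    have hterm : ∀ ξ : ℝ,
        (∑ d ∈ uepD m a hfin, (b d) • Complex.exp (Complex.I * (d : ℂ) * (ξ : ℝ)))
          * Complex.exp (Complex.I * ((-d0 : ℤ) : ℂ) * (ξ : ℝ))
        = ∑ d ∈ uepD m a hfin, (b d) • Complex.exp (Complex.I * ((d - d0 : ℤ) : ℂ) * (ξ : ℝ)) := by
      intro ξ
      rw [Finset.sum_mul]
      refine Finset.sum_congr rfl fun d _ => ?_
      rw [smul_mul_assoc, ← Complex.exp_add]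
      congr 2
      push_cast
      ring
    have hcont : ∀ c : ℂ, ∀ r : ℝ, Continuous fun ξ : ℝ => r • Complex.exp (c * (ξ : ℝ)) := by
      intro c r
      exact (Complex.continuous_exp.comp (continuous_const.mul Complex.continuous_ofReal)).const_smul r
    have hLHS : (∫ ξ : ℝ in (-Real.pi)..Real.pi,
        (∑ d ∈ uepD m a hfin, (b d) • Complex.exp (Complex.I * (d : ℂ) * (ξ : ℝ)))
          * Complex.exp (Complex.I * ((-d0 : ℤ) : ℂ) * (ξ : ℝ)))
        = ∑ d ∈ uepD m a hfin, (b d) •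
            ∫ ξ : ℝ in (-Real.pi)..Real.pi, Complex.exp (Complex.I * ((d - d0 : ℤ) : ℂ) * (ξ : ℝ)) := by
      rw [intervalIntegral.integral_congr (g := fun ξ : ℝ =>
        ∑ d ∈ uepD m a hfin, (b d) • Complex.exp (Complex.I * ((d - d0 : ℤ) : ℂ) * (ξ : ℝ)))
        (fun ξ _ => hterm ξ),
        intervalIntegral.integral_finset_sum (fun d _ =>
          (hcont (Complex.I * ((d - d0 : ℤ) : ℂ)) (b d)).intervalIntegrable _ _)]
      exact Finset.sum_congr rfl fun d _ => intervalIntegral.integral_smul _ _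
    have hkey := hinteq
    rw [hLHS] at hkey
    have hI : ∀ nn : ℤ, (∫ ξ : ℝ in (-Real.pi)..Real.pi,
        Complex.exp (Complex.I * (nn : ℂ) * (ξ : ℝ)))
        = if nn = 0 then (2 * Real.pi : ℂ) else 0 := uep_integral
    rw [hI (-d0)] at hkey
    have hsum : (∑ d ∈ uepD m a hfin, (b d) •
        (if (d - d0 : ℤ) = 0 then (2 * Real.pi : ℂ) else 0))
        = if d0 ∈ uepD m a hfin then (b d0) • (2 * Real.pi : ℂ) else 0 := by
      rw [show (∑ d ∈ uepD m a hfin, (b d) •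
          (if (d - d0 : ℤ) = 0 then (2 * Real.pi : ℂ) else 0))
        = ∑ d ∈ uepD m a hfin, (if d = d0 then (b d) • (2 * Real.pi : ℂ) else 0) from
        Finset.sum_congr rfl fun d _ => by
          rcases eq_or_ne d d0 with rfl | h
          · simp
          · rw [if_neg h, if_neg (by omega), smul_zero]]
      exact Finset.sum_ite_eq' _ _ _
    simp only [hI] at hkey
    rw [hsum] at hkey
    have h2π : (2 * Real.pi : ℂ) ≠ 0 := by
      simp [Complex.ext_iff]
    rcases eq_or_ne d0 0 with rfl | hd0
    · rw [if_pos hD0] at hkey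
      rw [if_pos (by norm_num : (-0 : ℤ) = 0)] at hkey
      rw [if_pos rfl]
      rw [Complex.real_smul] at hkey
      have : ((b 0 : ℝ) : ℂ) = 1 :=
        mul_right_cancel₀ h2π (by rw [hkey, one_mul])
      exact_mod_cast this
    · rw [if_neg hd0]
      by_cases hmem : d0 ∈ uepD m a hfin
      · rw [if_pos hmem, if_neg (by omega)] at hkey
        have : ((b d0 : ℝ) : ℂ) = 0 := by
          rw [Complex.real_smul] at hkey
          rcases mul_eq_zero.1 hkey with h | h
          · exact h
          · exact absurd h h2π
        exact_mod_cast this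
      · exact hbD d0 hmem
end

section
/- Suppose the sequences (fᵏ, uᵏ) generated by the alternating algorithm are bounded, the orthogonality constraints W₁ᵏ ∈ 𝒟₁ and W₂ᵏ ∈ 𝒟₂ hold for all k, and the objective values Fᵏ are bounded by F⁰. Then the coefficient sequences v₁ᵏ and v₂ᵏ satisfy ‖vᵢᵏ‖ ≤ ‖Wᵢᵏ xᵢᵏ‖ + √(2F⁰/μᵢ), and hence the full sequence Xᵏ = (fᵏ, uᵏ, W₁ᵏ, W₂ᵏ, v₁ᵏ, v₂ᵏ) is bounded and admits a convergent subsequence. -/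
open Matrix Filter

/-!
Since `‖vᵢ‖ ≤ ‖Wᵢ xᵢ‖ + ‖Wᵢ xᵢ - vᵢ‖` and the penalty term gives `‖Wᵢ xᵢ - vᵢ‖² ≤ 2F⁰/μᵢ`, the
coefficients are bounded once `Wᵢ xᵢ` is; and `Wᵢ` is an isometry (`Wᵢᵀ Wᵢ = I`), so
`‖Wᵢ xᵢ‖ = ‖xᵢ‖`. Orthonormal columns also have entries in `[-1, 1]`. Hence the whole
sequence stays in a product of compact boxes, and a convergent subsequence exists.
-/

instance Matrix.firstCountableTopology {ι κ R : Type*} [Countable ι] [Countable κ]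
    [TopologicalSpace R] [FirstCountableTopology R] : FirstCountableTopology (Matrix ι κ R) :=
  inferInstanceAs (FirstCountableTopology (ι → κ → R))

section EuclideanCoordinates

variable {ι : Type*} [Fintype ι]

lemma sqrt_sum_sq_le_sqrt_sum_sq_add_sqrt_sum_sq_sub (a v : ι → ℝ) :
    √(∑ j, v j ^ 2) ≤ √(∑ j, a j ^ 2) + √(∑ j, (a j - v j) ^ 2) := by
  have hnorm (x : ι → ℝ) : ‖WithLp.toLp 2 x‖ = √(∑ j, x j ^ 2) := by
    simp only [EuclideanSpace.norm_eq, Real.norm_eq_abs, sq_abs]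
  have := norm_sub_le (WithLp.toLp 2 a) (WithLp.toLp 2 (a - v))
  rwa [← WithLp.toLp_sub, sub_sub_cancel, hnorm, hnorm, hnorm] at this

lemma sqrt_sum_sq_le_of_half_mul_sum_sq_sub_le {μ F : ℝ} (hμ : 0 < μ) {a v : ι → ℝ}
    (h : μ / 2 * ∑ j, (a j - v j) ^ 2 ≤ F) :
    √(∑ j, v j ^ 2) ≤ √(∑ j, a j ^ 2) + √(2 * F / μ) := by
  refine (sqrt_sum_sq_le_sqrt_sum_sq_add_sqrt_sum_sq_sub a v).trans ?_
  gcongr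
  rw [le_div_iff₀ hμ]
  linarith

lemma abs_le_sqrt_sum_sq (v : ι → ℝ) (j : ι) : |v j| ≤ √(∑ i, v i ^ 2) :=
  Real.abs_le_sqrt (Finset.single_le_sum (fun i _ => sq_nonneg (v i)) (Finset.mem_univ j))

lemma sum_sq_le_card_mul_sq {x : ι → ℝ} {C : ℝ} (h : ∀ i, |x i| ≤ C) :
    ∑ i, x i ^ 2 ≤ Fintype.card ι * C ^ 2 := by
  have := Finset.sum_le_card_nsmul Finset.univ (fun i => x i ^ 2) (C ^ 2)
    fun i _ => sq_abs (x i) ▸ pow_le_pow_left₀ (abs_nonneg _) (h i) 2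
  simpa using this

end EuclideanCoordinates

lemma Pi.isCompact_setOf_forall_abs_le {ι : Type*} (C : ℝ) :
    IsCompact {x : ι → ℝ | ∀ i, |x i| ≤ C} := by
  simpa only [Set.pi, Set.mem_univ, true_implies, Set.mem_Icc, abs_le] using
    isCompact_univ_pi fun _ : ι => isCompact_Icc (a := -C) (b := C)

namespace Matrix

variable {ι κ : Type*} {W : Matrix ι κ ℝ}

lemma sum_sq_mulVec_of_transpose_mul_self_eq_one [Fintype ι] [Fintype κ] [DecidableEq κ]
    (h : Wᵀ * W = 1) (x : κ → ℝ) :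
    ∑ i, (W *ᵥ x) i ^ 2 = ∑ j, x j ^ 2 := by
  have : W *ᵥ x ⬝ᵥ W *ᵥ x = x ⬝ᵥ x := by
    rw [dotProduct_mulVec, ← mulVec_transpose, mulVec_mulVec, h, one_mulVec]
  simpa only [dotProduct, sq] using this

lemma abs_apply_le_one_of_transpose_mul_self_eq_one [Fintype ι] [DecidableEq κ]
    (h : Wᵀ * W = 1) (i : ι) (j : κ) : |W i j| ≤ 1 := by
  have hcol : ∑ i, W i j ^ 2 = 1 := by
    simpa [mul_apply, sq] using congrFun (congrFun h j) j
  simpa only [hcol, Real.sqrt_one] using abs_le_sqrt_sum_sq (fun i => W i j) i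

lemma isCompact_setOf_forall_abs_le (C : ℝ) :
    IsCompact {W : Matrix ι κ ℝ | ∀ i j, |W i j| ≤ C} := by
  have : IsCompact (Set.univ.pi fun _ : ι => {x : κ → ℝ | ∀ j, |x j| ≤ C}) :=
    isCompact_univ_pi fun _ => Pi.isCompact_setOf_forall_abs_le C
  simp only [Set.pi, Set.mem_univ, true_implies, Set.mem_ofPred_eq] at this
  exact this

end Matrix

theorem stmt_8_general {m n p q : ℕ}
    (f : ℕ → Fin m → ℝ) (u : ℕ → Fin n → ℝ)
    (W1 : ℕ → Matrix (Fin p) (Fin m) ℝ) (W2 : ℕ → Matrix (Fin q) (Fin n) ℝ)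
    (v1 : ℕ → Fin p → ℝ) (v2 : ℕ → Fin q → ℝ)
    (Fk : ℕ → ℝ) (μ1 μ2 : ℝ) (hμ1 : 0 < μ1) (hμ2 : 0 < μ2)
    (hbound : ∃ C : ℝ, ∀ k, (∀ i, |f k i| ≤ C) ∧ (∀ i, |u k i| ≤ C))
    (hW1 : ∀ k, (W1 k)ᵀ * W1 k = 1) (hW2 : ∀ k, (W2 k)ᵀ * W2 k = 1)
    (hF0 : ∀ k, Fk k ≤ Fk 0)
    (hterm1 : ∀ k, μ1 / 2 * ∑ j, ((W1 k).mulVec (f k) j - v1 k j) ^ 2 ≤ Fk k)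
    (hterm2 : ∀ k, μ2 / 2 * ∑ j, ((W2 k).mulVec (u k) j - v2 k j) ^ 2 ≤ Fk k) :
    (∀ k,
      Real.sqrt (∑ j, (v1 k j) ^ 2) ≤
          Real.sqrt (∑ j, ((W1 k).mulVec (f k) j) ^ 2) + Real.sqrt (2 * Fk 0 / μ1) ∧
      Real.sqrt (∑ j, (v2 k j) ^ 2) ≤
          Real.sqrt (∑ j, ((W2 k).mulVec (u k) j) ^ 2) + Real.sqrt (2 * Fk 0 / μ2)) ∧
    (∃ φ : ℕ → ℕ, StrictMono φ ∧
      ∃ Xstar : (Fin m → ℝ) × (Fin n → ℝ) × Matrix (Fin p) (Fin m) ℝ ×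
          Matrix (Fin q) (Fin n) ℝ × (Fin p → ℝ) × (Fin q → ℝ),
        Tendsto (fun k => (f (φ k), u (φ k), W1 (φ k), W2 (φ k), v1 (φ k), v2 (φ k)))
          atTop (nhds Xstar)) := by
  obtain ⟨C, hC⟩ := hbound
  have hv1 k := sqrt_sum_sq_le_of_half_mul_sum_sq_sub_le hμ1 ((hterm1 k).trans (hF0 k))
  have hv2 k := sqrt_sum_sq_le_of_half_mul_sum_sq_sub_le hμ2 ((hterm2 k).trans (hF0 k))
  refine ⟨fun k => ⟨hv1 k, hv2 k⟩, ?_⟩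
  have hv1_le k j : |v1 k j| ≤ √(m * C ^ 2) + √(2 * Fk 0 / μ1) := by
    refine (abs_le_sqrt_sum_sq _ j).trans ((hv1 k).trans ?_)
    rw [sum_sq_mulVec_of_transpose_mul_self_eq_one (hW1 k)]
    gcongr
    simpa using sum_sq_le_card_mul_sq (hC k).1
  have hv2_le k j : |v2 k j| ≤ √(n * C ^ 2) + √(2 * Fk 0 / μ2) := by
    refine (abs_le_sqrt_sum_sq _ j).trans ((hv2 k).trans ?_)
    rw [sum_sq_mulVec_of_transpose_mul_self_eq_one (hW2 k)]
    gcongr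
    simpa using sum_sq_le_card_mul_sq (hC k).2
  obtain ⟨Xstar, -, φ, hφ, hlim⟩ :=
    ((Pi.isCompact_setOf_forall_abs_le C).prod <|
      (Pi.isCompact_setOf_forall_abs_le C).prod <|
      (Matrix.isCompact_setOf_forall_abs_le 1).prod <|
      (Matrix.isCompact_setOf_forall_abs_le 1).prod <|
      (Pi.isCompact_setOf_forall_abs_le _).prod
        (Pi.isCompact_setOf_forall_abs_le _)).tendsto_subseq
      (x := fun k => (f k, u k, W1 k, W2 k, v1 k, v2 k))
      fun k => ⟨(hC k).1, (hC k).2, abs_apply_le_one_of_transpose_mul_self_eq_one (hW1 k),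
        abs_apply_le_one_of_transpose_mul_self_eq_one (hW2 k), hv1_le k, hv2_le k⟩
  exact ⟨φ, hφ, Xstar, hlim⟩

/-- Under boundedness of `(fᵏ, uᵏ)`, orthogonality of `W₁ᵏ, W₂ᵏ`, and the
objective bounds, the coefficient sequences satisfy
`‖vᵢᵏ‖ ≤ ‖Wᵢᵏ xᵢᵏ‖ + √(2F⁰/μᵢ)`; hence the full sequence is bounded and has a
convergent subsequence. -/
theorem stmt_8 {m n p q : ℕ}
    (f : ℕ → Fin m → ℝ) (u : ℕ → Fin n → ℝ)
    (W1 : ℕ → Matrix (Fin p) (Fin m) ℝ) (W2 : ℕ → Matrix (Fin q) (Fin n) ℝ)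
    (v1 : ℕ → Fin p → ℝ) (v2 : ℕ → Fin q → ℝ)
    (Fk : ℕ → ℝ) (μ1 μ2 : ℝ) (hμ1 : 0 < μ1) (hμ2 : 0 < μ2)
    (hbound : ∃ C : ℝ, ∀ k, (∀ i, |f k i| ≤ C) ∧ (∀ i, |u k i| ≤ C))
    (hW1 : ∀ k, (W1 k)ᵀ * W1 k = 1) (hW2 : ∀ k, (W2 k)ᵀ * W2 k = 1)
    (hFpos : ∀ k, 0 ≤ Fk k) (hF0 : ∀ k, Fk k ≤ Fk 0)
    (hterm1 : ∀ k, μ1 / 2 * ∑ j, ((W1 k).mulVec (f k) j - v1 k j) ^ 2 ≤ Fk k)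
    (hterm2 : ∀ k, μ2 / 2 * ∑ j, ((W2 k).mulVec (u k) j - v2 k j) ^ 2 ≤ Fk k) :
    (∀ k,
      Real.sqrt (∑ j, (v1 k j) ^ 2) ≤
          Real.sqrt (∑ j, ((W1 k).mulVec (f k) j) ^ 2) + Real.sqrt (2 * Fk 0 / μ1) ∧
      Real.sqrt (∑ j, (v2 k j) ^ 2) ≤
          Real.sqrt (∑ j, ((W2 k).mulVec (u k) j) ^ 2) + Real.sqrt (2 * Fk 0 / μ2)) ∧
    (∃ φ : ℕ → ℕ, StrictMono φ ∧
      ∃ Xstar : (Fin m → ℝ) × (Fin n → ℝ) × Matrix (Fin p) (Fin m) ℝ ×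
          Matrix (Fin q) (Fin n) ℝ × (Fin p → ℝ) × (Fin q → ℝ),
        Tendsto (fun k => (f (φ k), u (φ k), W1 (φ k), W2 (φ k), v1 (φ k), v2 (φ k)))
          atTop (nhds Xstar)) :=
  stmt_8_general f u W1 W2 v1 v2 Fk μ1 μ2 hμ1 hμ2 hbound hW1 hW2 hF0 hterm1 hterm2
end

section
/- Let F : ℝⁿ → ℝ ∪ {+∞} be proper, bounded below, and satisfy the KL property at a point X̄ with neighborhood U ⊇ B(X̄, r), constant η, and desingularizing function φ. Let (Xᵏ) satisfy: (i) sufficient decrease (l/2)‖Xᵏ⁺¹−Xᵏ‖² ≤ Fᵏ − Fᵏ⁺¹ with l > 0; (ii) relative error: there exists Aᵏ ∈ ∂F(Xᵏ) with ‖Aᵏ‖ ≤ M‖Xᵏ − Xᵏ⁻¹‖; (iii) F(X̄) < Fᵏ < F(X̄) + η for all k; and (iv) 2√((2/l)(F⁰ − F(X̄))) + (2M/l)φ(F⁰ − F(X̄)) + ‖X⁰ − X̄‖ < r. Then Xᵏ ∈ B(X̄, r) for all k ≥ 1, and Σ_{k=1}^∞ ‖Xᵏ⁺¹ − Xᵏ‖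 < ∞, so (Xᵏ) is a Cauchy sequence. -/
open Filter InnerProductSpace

open scoped RealInnerProductSpace in
/-- The Fréchet subdifferential of `F` at `x`. -/
def frechetSubdiff {E : Type*} [NormedAddCommGroup E] [InnerProductSpace ℝ E]
    (F : E → ℝ) (x : E) : Set E :=
  {w | ∀ ε > (0 : ℝ), ∀ᶠ y in nhds x, F x + ⟪w, y - x⟫ - ε * ‖y - x‖ ≤ F y}

/-- The limiting subdifferential of `F` at `x`. -/
def limitingSubdiff {E : Type*} [NormedAddCommGroup E] [InnerProductSpace ℝ E]
    (F : E → ℝ) (x : E) : Set E :=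
  {w | ∃ xs ws : ℕ → E,
    Tendsto xs atTop (nhds x) ∧ Tendsto (fun k => F (xs k)) atTop (nhds (F x)) ∧
    (∀ k, ws k ∈ frechetSubdiff F (xs k)) ∧ Tendsto ws atTop (nhds w)}


private lemma amgm_aux {x u c : ℝ} (hx : 0 ≤ x) (hu : 0 ≤ u) (hc : 0 ≤ c)
    (h : x ^ 2 ≤ c * u) : 2 * x ≤ u + c := by
  nlinarith [sq_nonneg (u - c), sq_nonneg (u + c - 2 * x), mul_nonneg hu hc]
/-- KL convergence theorem: under sufficient decrease, relative error, the KL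
inequality near `X̄`, and the initialization condition, the iterates stay in
`B(X̄, r)` and the step sizes are summable, so the sequence is Cauchy. -/
theorem stmt_9 {n : ℕ} (F : EuclideanSpace ℝ (Fin n) → ℝ)
    (hbdd : ∃ B : ℝ, ∀ x, B ≤ F x)
    (Xbar : EuclideanSpace ℝ (Fin n)) (r η l M : ℝ) (φ : ℝ → ℝ)
    (hr : 0 < r) (hη : 0 < η) (hl : 0 < l) (hM : 0 < M)
    (hφ0 : φ 0 = 0) (hφcont : ContinuousOn φ (Set.Ico 0 η))
    (hφconc : ConcaveOn ℝ (Set.Ico 0 η) φ)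
    (hφdiff : ∀ z ∈ Set.Ioo 0 η, DifferentiableAt ℝ φ z ∧ 0 < deriv φ z)
    (hKL : ∀ x ∈ Metric.closedBall Xbar r, F Xbar < F x → F x < F Xbar + η →
      ∀ w ∈ limitingSubdiff F x, 1 ≤ deriv φ (F x - F Xbar) * ‖w‖)
    (X : ℕ → EuclideanSpace ℝ (Fin n))
    (hdec : ∀ k : ℕ, l / 2 * ‖X (k + 1) - X k‖ ^ 2 ≤ F (X k) - F (X (k + 1)))
    (herr : ∀ k : ℕ, 1 ≤ k →
      ∃ A ∈ limitingSubdiff F (X k), ‖A‖ ≤ M * ‖X k - X (k - 1)‖)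
    (hrange : ∀ k, F Xbar < F (X k) ∧ F (X k) < F Xbar + η)
    (hinit : 2 * Real.sqrt (2 / l * (F (X 0) - F Xbar)) +
        2 * M / l * φ (F (X 0) - F Xbar) + ‖X 0 - Xbar‖ < r) :
    (∀ k : ℕ, 1 ≤ k → X k ∈ Metric.closedBall Xbar r) ∧
    Summable (fun k => ‖X (k + 1) - X k‖) ∧ CauchySeq X := by
  classical
  set Fb := F Xbar with hFb
  set f : ℕ → ℝ := fun k => F (X k) - Fb with hf
  set b : ℕ → ℝ := fun k => ‖X (k + 1) - X k‖ with hbdef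
  set C : ℝ := 2 * M / l with hC
  set Δ : ℕ → ℝ := fun k => φ (f k) with hΔ
  have hCpos : 0 < C := by positivity
  have hb : ∀ k, 0 ≤ b k := fun k => norm_nonneg _
  have hfIoo : ∀ k, f k ∈ Set.Ioo 0 η := by
    intro k
    have h := hrange k
    constructor <;> simp [hf] <;> linarith [h.1, h.2]
  have hfIco : ∀ k, f k ∈ Set.Ico 0 η := fun k => ⟨(hfIoo k).1.le, (hfIoo k).2⟩
  have h0Ico : (0 : ℝ) ∈ Set.Ico 0 η := ⟨le_refl _, hη⟩
  have hfdec : ∀ k, f (k + 1) ≤ f k := by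
    intro k
    have h := hdec k
    have : (0:ℝ) ≤ l / 2 * ‖X (k + 1) - X k‖ ^ 2 := by positivity
    simp only [hf]
    linarith
  have hmono : StrictMonoOn φ (Set.Ico 0 η) := by
    apply strictMonoOn_of_deriv_pos (convex_Ico 0 η) hφcont
    intro z hz
    rw [interior_Ico] at hz
    exact (hφdiff z hz).2
  have hφmono : MonotoneOn φ (Set.Ico 0 η) := hmono.monotoneOn
  have hΔnonneg : ∀ k, 0 ≤ Δ k := by
    intro k
    have := hφmono h0Ico (hfIco k) (hfIoo k).1.le
    simpa [hΔ, hφ0] using this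
  have hΔdec : ∀ k, Δ (k + 1) ≤ Δ k := fun k =>
    hφmono (hfIco (k + 1)) (hfIco k) (hfdec k)
  -- the key per-step inequality
  have hkey : ∀ k : ℕ, X (k + 1) ∈ Metric.closedBall Xbar r →
      2 * b (k + 1) ≤ b k + C * (Δ (k + 1) - Δ (k + 2)) := by
    intro k hball
    obtain ⟨A, hA, hAn⟩ := herr (k + 1) (by omega)
    have hAn' : ‖A‖ ≤ M * b k := by
      simpa [hbdef] using hAn
    have hKL1 : 1 ≤ deriv φ (f (k + 1)) * ‖A‖ :=
      hKL (X (k + 1)) hball (hrange (k + 1)).1 (hrange (k + 1)).2 A hA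
    set d : ℝ := deriv φ (f (k + 1)) with hd
    have hdpos : 0 < d := (hφdiff _ (hfIoo (k + 1))).2
    have hdiffφ : DifferentiableAt ℝ φ (f (k + 1)) := (hφdiff _ (hfIoo (k + 1))).1
    -- tangent inequality
    have htang : d * (f (k + 1) - f (k + 2)) ≤ Δ (k + 1) - Δ (k + 2) := by
      rcases eq_or_lt_of_le (hfdec (k + 1)) with heq | hlt
      · simp [hΔ, heq]
      · have hslope := hφconc.deriv_le_slope (hfIco (k + 2)) (hfIco (k + 1)) hlt hdiffφ
        rw [slope_def_field] at hslope
        have hpos : 0 < f (k + 1) - f (k + 2) := by linarith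
        have h := (le_div_iff₀ hpos).mp hslope
        simpa [hΔ] using h
    have hdecn : l / 2 * b (k + 1) ^ 2 ≤ f (k + 1) - f (k + 2) := by
      have := hdec (k + 1)
      simp only [hf, hbdef]
      simpa using this
    have h1 : 1 ≤ d * (M * b k) :=
      hKL1.trans (mul_le_mul_of_nonneg_left hAn' hdpos.le)
    have h2 : d * (l / 2 * b (k + 1) ^ 2) ≤ Δ (k + 1) - Δ (k + 2) :=
      (mul_le_mul_of_nonneg_left hdecn hdpos.le).trans htang
    set D : ℝ := Δ (k + 1) - Δ (k + 2) with hD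
    have hDnn : 0 ≤ D := by
      have := hΔdec (k + 1)
      simp only [hD]; linarith
    -- eliminate d
    have h3 : l * b (k + 1) ^ 2 ≤ 2 * M * b k * D := by
      have e1 : 2 * D ≤ 2 * D * (d * (M * b k)) := by nlinarith
      have e3 : d * (l * b (k + 1) ^ 2) ≤ d * (2 * M * b k * D) := by nlinarith
      exact le_of_mul_le_mul_left (by linarith) hdpos
    -- AM-GM
    have hck : 0 ≤ C * D := mul_nonneg hCpos.le hDnn
    have hcd : b (k + 1) ^ 2 ≤ (C * D) * b k := by
      rw [hC]
      rw [div_mul_eq_mul_div, div_mul_eq_mul_div, le_div_iff₀ hl]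
      nlinarith
    exact amgm_aux (hb (k + 1)) (hb k) hck hcd
  -- triangle inequality bound
  have htri : ∀ m : ℕ, ‖X m - Xbar‖ ≤ (∑ k ∈ Finset.range m, b k) + ‖X 0 - Xbar‖ := by
    intro m
    induction m with
    | zero => simp
    | succ m ih =>
      have : ‖X (m + 1) - Xbar‖ ≤ ‖X (m + 1) - X m‖ + ‖X m - Xbar‖ :=
        norm_sub_le_norm_sub_add_norm_sub _ _ _
      rw [Finset.sum_range_succ]
      have hbm : ‖X (m + 1) - X m‖ = b m := rfl
      linarith
  -- bound on b 0 and Δ 1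
  have hb0 : b 0 ≤ Real.sqrt (2 / l * f 0) := by
    have h0 : b 0 ^ 2 ≤ 2 / l * f 0 := by
      have hf1 := (hfIoo 1).1
      have h1 : l / 2 * b 0 ^ 2 ≤ f 0 - f 1 := by
        simp only [hf, hbdef]; simpa using hdec 0
      have h2l : (0:ℝ) < 2 / l := by positivity
      have h2 := mul_le_mul_of_nonneg_left h1 h2l.le
      have h3 : 2 / l * (l / 2 * b 0 ^ 2) = b 0 ^ 2 := by
        field_simp
      have h4 : 2 / l * (f 0 - f 1) ≤ 2 / l * f 0 :=
        mul_le_mul_of_nonneg_left (sub_le_self (f 0) hf1.le) h2l.le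
      calc b 0 ^ 2 = 2 / l * (l / 2 * b 0 ^ 2) := h3.symm
        _ ≤ 2 / l * (f 0 - f 1) := h2
        _ ≤ 2 / l * f 0 := h4
    have := Real.sqrt_le_sqrt h0
    rwa [Real.sqrt_sq (hb 0)] at this
  have hΔ1 : Δ 1 ≤ φ (f 0) := hφmono (hfIco 1) (hfIco 0) (hfdec 0)
  have hsqrt_nn : 0 ≤ Real.sqrt (2 / l * f 0) := Real.sqrt_nonneg _
  have hφf0 : 0 ≤ φ (f 0) := by
    have := hφmono h0Ico (hfIco 0) (hfIoo 0).1.le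
    simpa [hφ0] using this
  have hinit' : 2 * Real.sqrt (2 / l * f 0) + C * φ (f 0) + ‖X 0 - Xbar‖ < r := by
    simpa [hf, hC] using hinit
  -- main induction
  have main : ∀ K : ℕ, (∀ j, 1 ≤ j → j ≤ K → X j ∈ Metric.closedBall Xbar r) ∧
      (∑ k ∈ Finset.Ico 1 (K + 1), b k) + b K ≤ b 0 + C * (Δ 1 - Δ (K + 1)) := by
    intro K
    induction K with
    | zero =>
      refine ⟨fun j hj1 hj0 => by omega, ?_⟩
      simp
    | succ K ih =>
      obtain ⟨ihball, ihsum⟩ := ih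
      have hsum_range : ∑ k ∈ Finset.range (K + 1), b k
          = b 0 + ∑ k ∈ Finset.Ico 1 (K + 1), b k := by
        rw [Finset.range_eq_Ico, Finset.sum_eq_sum_Ico_succ_bot (by omega)]
      have hT : ∑ k ∈ Finset.Ico 1 (K + 1), b k ≤ b 0 + C * Δ 1 := by
        have h1 : C * (Δ 1 - Δ (K + 1)) ≤ C * Δ 1 :=
          mul_le_mul_of_nonneg_left (by linarith [hΔnonneg (K + 1)]) hCpos.le
        linarith [hb K]
      have hball1 : X (K + 1) ∈ Metric.closedBall Xbar r := by
        rw [Metric.mem_closedBall, dist_eq_norm]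
        have := htri (K + 1)
        rw [hsum_range] at this
        have hcd1 : C * Δ 1 ≤ C * φ (f 0) :=
          mul_le_mul_of_nonneg_left hΔ1 hCpos.le
        calc ‖X (K + 1) - Xbar‖
            ≤ b 0 + (∑ k ∈ Finset.Ico 1 (K + 1), b k) + ‖X 0 - Xbar‖ := by linarith
          _ ≤ 2 * b 0 + C * Δ 1 + ‖X 0 - Xbar‖ := by linarith
          _ ≤ 2 * Real.sqrt (2 / l * f 0) + C * φ (f 0) + ‖X 0 - Xbar‖ := by linarith
          _ ≤ r := hinit'.le
      have hkeyK := hkey K hball1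
      refine ⟨?_, ?_⟩
      · intro j hj1 hj2
        rcases Nat.lt_or_ge j (K + 1) with h | h
        · exact ihball j hj1 (by omega)
        · have : j = K + 1 := by omega
          rw [this]; exact hball1
      · rw [Finset.sum_Ico_succ_top (by omega : 1 ≤ K + 1)]
        linarith
  have hballAll : ∀ k : ℕ, 1 ≤ k → X k ∈ Metric.closedBall Xbar r :=
    fun k hk => (main k).1 k hk le_rfl
  have hsummable : Summable b := by
    apply summable_of_sum_range_le (c := 2 * b 0 + C * Δ 1) hb
    intro m
    cases m with
    | zero =>
      have h1 : 0 ≤ C * Δ 1 := mul_nonneg hCpos.le (hΔnonneg 1)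
      simp only [Finset.range_zero, Finset.sum_empty]
      linarith [hb 0]
    | succ m =>
      have hsum_range : ∑ k ∈ Finset.range (m + 1), b k
          = b 0 + ∑ k ∈ Finset.Ico 1 (m + 1), b k := by
        rw [Finset.range_eq_Ico, Finset.sum_eq_sum_Ico_succ_bot (by omega)]
      have := (main m).2
      have h1 : C * (Δ 1 - Δ (m + 1)) ≤ C * Δ 1 :=
        mul_le_mul_of_nonneg_left (by linarith [hΔnonneg (m + 1)]) hCpos.le
      rw [hsum_range]
      linarith [hb m]
  refine ⟨hballAll, hsummable, ?_⟩
  apply cauchySeq_of_summable_dist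
  apply hsummable.congr
  intro k
  simp only [hbdef, dist_eq_norm, norm_sub_rev]
end

section
/- Under the hypotheses of the KL convergence theorem (sufficient decrease, relative error bound, KL inequality at X̄, and the initialization condition on X⁰), for each k ≥ 1 the following recursive inequality holds: ‖Xᵏ − Xᵏ⁻¹‖ + (2M/l)(φ(Fᵏ − F̄) − φ(Fᵏ⁺¹ − F̄)) ≥ 2‖Xᵏ⁺¹ − Xᵏ‖, where F̄ = F(X̄). -/
open Filter InnerProductSpace

/-!
Write `bₖ = ‖Xᵏ⁺¹ − Xᵏ‖` and `yₖ = Fᵏ − F̄`. Concavity of `φ` gives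
`φ(yₖ) − φ(yₖ₊₁) ≥ φ′(yₖ)(yₖ − yₖ₊₁) ≥ φ′(yₖ) (l/2) bₖ²`, and while `Xᵏ` stays in the KL ball,
the KL inequality with the relative error bound gives `1 ≤ φ′(yₖ) M bₖ₋₁`. Together
`bₖ² ≤ bₖ₋₁ · (2M/l)(φ(yₖ) − φ(yₖ₊₁))`, and AM–GM yields the inequality. It remains to see that
the iterates never leave the ball: summing the inequality telescopes to
`∑ bⱼ ≤ 2 b₀ + (2M/l) φ(y₁)`, which the initialization condition keeps below `r − ‖X⁰ − X̄‖`.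
-/

open Finset Set

lemma ConcaveOn.deriv_mul_sub_le_sub {S : Set ℝ} {f : ℝ → ℝ} {x y : ℝ} (hf : ConcaveOn ℝ S f)
    (hx : x ∈ S) (hy : y ∈ S) (hxy : x ≤ y) (hfd : DifferentiableAt ℝ f y) :
    deriv f y * (y - x) ≤ f y - f x := by
  rcases hxy.eq_or_lt with rfl | hlt
  · simp
  have h := hf.deriv_le_slope hx hy hlt hfd
  rwa [slope_def_field, le_div_iff₀ (sub_pos.2 hlt)] at h

lemma ConcaveOn.le_of_deriv_nonneg {S : Set ℝ} {f : ℝ → ℝ} {x y : ℝ} (hf : ConcaveOn ℝ S f)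
    (hx : x ∈ S) (hy : y ∈ S) (hxy : x ≤ y) (hfd : DifferentiableAt ℝ f y) (hf' : 0 ≤ deriv f y) :
    f x ≤ f y :=
  sub_nonneg.1 <| (mul_nonneg hf' (sub_nonneg.2 hxy)).trans (hf.deriv_mul_sub_le_sub hx hy hxy hfd)

lemma two_mul_le_add_of_sufficient_decrease {a b d Δ l M p : ℝ} (hl : 0 < l) (hM : 0 < M)
    (hp : 0 < p) (hKL : 1 ≤ p * (M * a)) (hdec : l / 2 * b ^ 2 ≤ d) (hΔ : p * d ≤ Δ) :
    2 * b ≤ a + 2 * M / l * Δ := by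
  have ha : 0 < a := by
    by_contra! h
    nlinarith [mul_pos hp hM]
  have hb : l / 2 * b ^ 2 ≤ M * a * Δ :=
    calc l / 2 * b ^ 2 ≤ p * (M * a) * (l / 2 * b ^ 2) := le_mul_of_one_le_left (by positivity) hKL
      _ ≤ p * (M * a) * d := by gcongr
      _ = M * a * (p * d) := by ring
      _ ≤ M * a * Δ := by gcongr
  refine two_mul_le_add_of_sq_le_mul ha.le ?_ ?_
  · have : 0 ≤ M * a * Δ := (by positivity : 0 ≤ l / 2 * b ^ 2).trans hb
    have : 0 ≤ Δ := nonneg_of_mul_nonneg_right this (by positivity)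
    positivity
  · calc b ^ 2 = 2 / l * (l / 2 * b ^ 2) := by field_simp
      _ ≤ 2 / l * (M * a * Δ) := by gcongr
      _ = a * (2 * M / l * Δ) := by ring

lemma le_sqrt_of_half_mul_sq_le {b d l : ℝ} (hl : 0 < l) (h : l / 2 * b ^ 2 ≤ d) :
    b ≤ √(2 / l * d) := by
  apply Real.le_sqrt_of_sq_le
  rw [div_mul_eq_mul_div, le_div_iff₀ hl]
  linarith

lemma sum_range_add_le_of_two_mul_le {b u : ℕ → ℝ} {k : ℕ}
    (h : ∀ j < k, 2 * b (j + 1) ≤ b j + (u (j + 1) - u (j + 2))) :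
    ∑ j ∈ range (k + 1), b j + b k + u (k + 1) ≤ 2 * b 0 + u 1 := by
  induction k with
  | zero => rw [sum_range_one]; linarith
  | succ k ih =>
    have hk := h k k.lt_succ_self
    have := ih fun j hj ↦ h j (hj.trans k.lt_succ_self)
    rw [sum_range_succ]
    linarith

lemma dist_le_of_two_mul_dist_le {α : Type*} [PseudoMetricSpace α] {X : ℕ → α} {x : α}
    {u : ℕ → ℝ} {r : ℝ} (hu : ∀ k, 0 ≤ u k)
    (hstep : ∀ k, 1 ≤ k → dist (X k) x ≤ r →
      2 * dist (X (k + 1)) (X k) ≤ dist (X k) (X (k - 1)) + (u k - u (k + 1)))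
    (hinit : 2 * dist (X 1) (X 0) + u 1 + dist (X 0) x ≤ r) (k : ℕ) :
    dist (X k) x ≤ r := by
  induction k using Nat.strong_induction_on with | _ k ih =>
  rcases k with _ | k
  · linarith [dist_nonneg (x := X 1) (y := X 0), hu 1]
  have hsum := sum_range_add_le_of_two_mul_le (b := fun j ↦ dist (X (j + 1)) (X j)) (u := u)
    (k := k) fun j hj ↦ by simpa using hstep (j + 1) (by omega) (ih (j + 1) (by omega))
  have hpath : dist (X (k + 1)) (X 0) ≤ ∑ j ∈ range (k + 1), dist (X (j + 1)) (X j) := by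
    calc dist (X (k + 1)) (X 0) = dist (X 0) (X (k + 1)) := dist_comm _ _
      _ ≤ ∑ j ∈ range (k + 1), dist (X j) (X (j + 1)) := dist_le_range_sum_dist X (k + 1)
      _ = ∑ j ∈ range (k + 1), dist (X (j + 1)) (X j) := sum_congr rfl fun j _ ↦ dist_comm _ _
  linarith [dist_triangle (X (k + 1)) (X 0) x, dist_nonneg (x := X (k + 1)) (y := X k), hu (k + 1)]

theorem stmt_10_general {n : ℕ} (F : EuclideanSpace ℝ (Fin n) → ℝ)
    (Xbar : EuclideanSpace ℝ (Fin n)) (r η l M : ℝ) (φ : ℝ → ℝ)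
    (hη : 0 < η) (hl : 0 < l) (hM : 0 < M)
    (hφ0 : φ 0 = 0)
    (hφconc : ConcaveOn ℝ (Set.Ico 0 η) φ)
    (hφdiff : ∀ z ∈ Set.Ioo 0 η, DifferentiableAt ℝ φ z ∧ 0 < deriv φ z)
    (hKL : ∀ x ∈ Metric.closedBall Xbar r, F Xbar < F x → F x < F Xbar + η →
      ∀ w ∈ limitingSubdiff F x, 1 ≤ deriv φ (F x - F Xbar) * ‖w‖)
    (X : ℕ → EuclideanSpace ℝ (Fin n))
    (hdec : ∀ k : ℕ, l / 2 * ‖X (k + 1) - X k‖ ^ 2 ≤ F (X k) - F (X (k + 1)))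
    (herr : ∀ k : ℕ, 1 ≤ k →
      ∃ A ∈ limitingSubdiff F (X k), ‖A‖ ≤ M * ‖X k - X (k - 1)‖)
    (hrange : ∀ k, F Xbar < F (X k) ∧ F (X k) < F Xbar + η)
    (hinit : 2 * Real.sqrt (2 / l * (F (X 0) - F Xbar)) +
        2 * M / l * φ (F (X 0) - F Xbar) + ‖X 0 - Xbar‖ < r) :
    ∀ k : ℕ, 1 ≤ k →
      2 * ‖X (k + 1) - X k‖ ≤
        ‖X k - X (k - 1)‖ +
          2 * M / l * (φ (F (X k) - F Xbar) - φ (F (X (k + 1)) - F Xbar)) := by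
  have hy : ∀ j, F (X j) - F Xbar ∈ Ioo 0 η := fun j ↦
    ⟨sub_pos.2 (hrange j).1, sub_lt_iff_lt_add'.2 (hrange j).2⟩
  have hy_anti : ∀ j, F (X (j + 1)) - F Xbar ≤ F (X j) - F Xbar := fun j ↦
    sub_le_sub_right (sub_nonneg.1 ((by positivity : (0 : ℝ) ≤ _).trans (hdec j))) _
  have hφ_descent : ∀ j, deriv φ (F (X j) - F Xbar) * (F (X j) - F (X (j + 1))) ≤
      φ (F (X j) - F Xbar) - φ (F (X (j + 1)) - F Xbar) := fun j ↦ by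
    simpa only [sub_sub_sub_cancel_right] using
      hφconc.deriv_mul_sub_le_sub (Ioo_subset_Ico_self (hy (j + 1))) (Ioo_subset_Ico_self (hy j))
        (hy_anti j) (hφdiff _ (hy j)).1
  have hφ_mono : ∀ {z}, z ∈ Ico 0 η → ∀ j, z ≤ F (X j) - F Xbar → φ z ≤ φ (F (X j) - F Xbar) :=
    fun hz j hzj ↦ hφconc.le_of_deriv_nonneg hz (Ioo_subset_Ico_self (hy j)) hzj
      (hφdiff _ (hy j)).1 (hφdiff _ (hy j)).2.le
  have hstep : ∀ k, 1 ≤ k → dist (X k) Xbar ≤ r →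
      2 * ‖X (k + 1) - X k‖ ≤ ‖X k - X (k - 1)‖ +
        2 * M / l * (φ (F (X k) - F Xbar) - φ (F (X (k + 1)) - F Xbar)) := by
    intro k hk hball
    obtain ⟨A, hA, hA_le⟩ := herr k hk
    refine two_mul_le_add_of_sufficient_decrease hl hM (hφdiff _ (hy k)).2 ?_ (hdec k)
      (hφ_descent k)
    exact (hKL _ hball (hrange k).1 (hrange k).2 A hA).trans
      (mul_le_mul_of_nonneg_left hA_le (hφdiff _ (hy k)).2.le)
  have hinit' : 2 * dist (X 1) (X 0) + 2 * M / l * φ (F (X 1) - F Xbar) + dist (X 0) Xbar ≤ r := by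
    have hb₀ := le_sqrt_of_half_mul_sq_le (d := F (X 0) - F Xbar) hl
      ((hdec 0).trans (by linarith [(hrange 1).1]))
    have hφ₁ := hφ_mono (Ioo_subset_Ico_self (hy 1)) 0 (hy_anti 0)
    rw [dist_eq_norm, dist_eq_norm]
    linarith [mul_le_mul_of_nonneg_left hφ₁ (by positivity : (0 : ℝ) ≤ 2 * M / l)]
  have hball := dist_le_of_two_mul_dist_le (u := fun j ↦ 2 * M / l * φ (F (X j) - F Xbar))
    (fun j ↦ mul_nonneg (by positivity) (hφ0 ▸ hφ_mono ⟨le_rfl, hη⟩ j (hy j).1.le))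
    (fun k hk hball ↦ by simpa only [dist_eq_norm, mul_sub] using hstep k hk hball) hinit'
  exact fun k hk ↦ hstep k hk (hball k)

/-- Recursive KL inequality: under the hypotheses of the KL convergence
theorem, for each `k ≥ 1`,
`‖Xᵏ − Xᵏ⁻¹‖ + (2M/l)(φ(Fᵏ − F̄) − φ(Fᵏ⁺¹ − F̄)) ≥ 2‖Xᵏ⁺¹ − Xᵏ‖`. -/
theorem stmt_10 {n : ℕ} (F : EuclideanSpace ℝ (Fin n) → ℝ)
    (hbdd : ∃ B : ℝ, ∀ x, B ≤ F x)
    (Xbar : EuclideanSpace ℝ (Fin n)) (r η l M : ℝ) (φ : ℝ → ℝ)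
    (hr : 0 < r) (hη : 0 < η) (hl : 0 < l) (hM : 0 < M)
    (hφ0 : φ 0 = 0) (hφcont : ContinuousOn φ (Set.Ico 0 η))
    (hφconc : ConcaveOn ℝ (Set.Ico 0 η) φ)
    (hφdiff : ∀ z ∈ Set.Ioo 0 η, DifferentiableAt ℝ φ z ∧ 0 < deriv φ z)
    (hKL : ∀ x ∈ Metric.closedBall Xbar r, F Xbar < F x → F x < F Xbar + η →
      ∀ w ∈ limitingSubdiff F x, 1 ≤ deriv φ (F x - F Xbar) * ‖w‖)
    (X : ℕ → EuclideanSpace ℝ (Fin n))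
    (hdec : ∀ k : ℕ, l / 2 * ‖X (k + 1) - X k‖ ^ 2 ≤ F (X k) - F (X (k + 1)))
    (herr : ∀ k : ℕ, 1 ≤ k →
      ∃ A ∈ limitingSubdiff F (X k), ‖A‖ ≤ M * ‖X k - X (k - 1)‖)
    (hrange : ∀ k, F Xbar < F (X k) ∧ F (X k) < F Xbar + η)
    (hinit : 2 * Real.sqrt (2 / l * (F (X 0) - F Xbar)) +
        2 * M / l * φ (F (X 0) - F Xbar) + ‖X 0 - Xbar‖ < r) :
    ∀ k : ℕ, 1 ≤ k →
      2 * ‖X (k + 1) - X k‖ ≤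
        ‖X k - X (k - 1)‖ +
          2 * M / l * (φ (F (X k) - F Xbar) - φ (F (X (k + 1)) - F Xbar)) :=
  stmt_10_general F Xbar r η l M φ hη hl hM hφ0 hφconc hφdiff hKL X hdec herr hrange hinit
end

section
/- Let F : ℝⁿ → ℝ ∪ {+∞} be proper, and suppose X* satisfies: for every direction decomposition into blocks i = 1,…,N there exist constants cᵢ ≥ 0 such that F(X*) ≤ F(X* + δᵢ) + (cᵢ/2)‖δᵢ‖² for all perturbations δᵢ supported in block i, and F(X) = Q(X) + Σᵢ hᵢ(xᵢ) where Q is C¹ (so first-order Taylor applies) and each hᵢ depends only on block i. Then lim inf_{‖δX‖→0} (F(X* + δX) − F(X*))/‖δX‖ ≥ 0, i.e., 0 belongs to the Fréchet subdifferential of F at X*, so X* is a stationary point. -/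
/-!
Split `v = X - X*` into its blocks `vᵢ`. Since `Σᵢ hᵢ` is block-separable, its increment along `v`
is the sum of its increments along the `vᵢ`, so the blockwise inequalities give
`F X* ≤ F X + Σᵢ cᵢ/2 ‖vᵢ‖² + (Σᵢ (Q(X* + vᵢ) - Q X*) - (Q(X* + v) - Q X*))`.
The linear parts of `Q` cancel in the last bracket, which is therefore `o(‖v‖)`,
as is the quadratic term.
-/

open Filter InnerProductSpace

open Topology Asymptotics

lemma zero_mem_frechetSubdiff_of_le_add_isLittleO {E : Type*} [NormedAddCommGroup E]
    [InnerProductSpace ℝ E] {F R : E → ℝ} {x : E} (hR : R =o[𝓝 0] id)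
    (hF : ∀ v, F x ≤ F (x + v) + R v) : 0 ∈ frechetSubdiff F x := by
  intro ε hε
  have hR' : (fun y => R (y - x)) =o[𝓝 x] (fun y => y - x) :=
    hR.comp_tendsto (tendsto_sub_nhds_zero_iff.mpr tendsto_id)
  filter_upwards [hR'.def hε] with y hy
  have hFy := hF (y - x)
  rw [add_sub_cancel] at hFy
  rw [Real.norm_eq_abs] at hy
  rw [inner_zero_left, add_zero]
  linarith [le_abs_self (R (y - x))]

namespace PiLp

variable {ι : Type*} [Fintype ι] {p : ENNReal} {β : ι → Type*}

lemma isLittleO_sum_mul_norm_apply_sq [Fact (1 ≤ p)] [∀ i, SeminormedAddCommGroup (β i)]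
    (c : ι → ℝ) : (fun v : PiLp p β => ∑ i, c i / 2 * ‖v i‖ ^ 2) =o[𝓝 0] id := by
  refine IsLittleO.fun_sum fun i _ => ?_
  have hsq : (fun v : PiLp p β => ‖v i‖ ^ 2) =O[𝓝 0] fun v => ‖v‖ ^ 2 :=
    IsBigO.of_bound 1 <| Eventually.of_forall fun v => by
      simpa using pow_le_pow_left₀ (norm_nonneg _) (norm_apply_le v i) 2
  exact (hsq.trans_isLittleO (isLittleO_norm_pow_id one_lt_two)).const_mul_left _

variable [DecidableEq ι]

lemma sum_single_apply_self [∀ i, AddCommGroup (β i)] (v : PiLp p β) :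
    ∑ i, single p i (v i) = v := by
  simp_rw [← toLp_single, ← WithLp.toLp_sum, Finset.univ_sum_single]

lemma sum_apply_sub_eq_sum_sum_single_apply_sub [∀ i, AddCommGroup (β i)] {M : Type*}
    [AddCommGroup M] (h : ∀ i, β i → M) (x v : PiLp p β) :
    ∑ i, h i ((x + v) i) - ∑ i, h i (x i) =
      ∑ i, (∑ j, h j ((x + single p i (v i)) j) - ∑ j, h j (x j)) := by
  rw [← Finset.sum_sub_distrib]
  refine Finset.sum_congr rfl fun i _ => ?_
  rw [← Finset.sum_sub_distrib, Fintype.sum_eq_single i fun j hj => ?_]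
  · simp only [WithLp.ofLp_add, Pi.add_apply, single_eq_same]
  · simp only [WithLp.ofLp_add, Pi.add_apply, single_eq_of_ne p hj, add_zero, sub_self]

lemma isBigO_single_apply [Fact (1 ≤ p)] [∀ i, SeminormedAddCommGroup (β i)] (i : ι) :
    (fun v : PiLp p β => single p i (v i)) =O[𝓝 0] id :=
  IsBigO.of_bound 1 <| Eventually.of_forall fun v => by
    simpa only [norm_single, id, one_mul] using norm_apply_le v i

lemma _root_.HasFDerivAt.isLittleO_sum_sub_single [Fact (1 ≤ p)]
    [∀ i, NormedAddCommGroup (β i)] [∀ i, NormedSpace ℝ (β i)] {Q : PiLp p β → ℝ}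
    {Q' : PiLp p β →L[ℝ] ℝ} {x : PiLp p β} (hQ : HasFDerivAt Q Q' x) :
    (fun v => ∑ i, (Q (x + single p i (v i)) - Q x) - (Q (x + v) - Q x)) =o[𝓝 0] id := by
  set ρ := fun u => Q (x + u) - Q x - Q' u
  have hρ : ρ =o[𝓝 0] id := hasFDerivAt_iff_isLittleO_nhds_zero.mp hQ
  have hblocks : ∀ i, (fun v : PiLp p β => ρ (single p i (v i))) =o[𝓝 0] id := fun i =>
    (hρ.comp_tendsto <| by
        simpa using (isBigO_single_apply i).trans_tendsto tendsto_id).trans_isBigO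
      (isBigO_single_apply i)
  refine ((IsLittleO.fun_sum (s := Finset.univ) fun i _ => hblocks i).sub hρ).congr_left
    fun v => ?_
  have hlin : ∑ i, Q' (single p i (v i)) = Q' v := by rw [← map_sum, sum_single_apply_self]
  simp only [ρ, Finset.sum_sub_distrib] at hlin ⊢
  rw [hlin]
  ring

end PiLp

open PiLp in
theorem zero_mem_frechetSubdiff_of_blockwise_le {ι : Type*} [Fintype ι] [DecidableEq ι]
    {β : ι → Type*} [∀ i, NormedAddCommGroup (β i)] [∀ i, InnerProductSpace ℝ (β i)]
    {F Q : PiLp 2 β → ℝ} {h : ∀ i, β i → ℝ} {x : PiLp 2 β} {c : ι → ℝ}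
    (hQ : DifferentiableAt ℝ Q x) (hF : ∀ y, F y = Q y + ∑ i, h i (y i))
    (hblock : ∀ i (b : β i), F x ≤ F (x + single 2 i b) + c i / 2 * ‖b‖ ^ 2) :
    0 ∈ frechetSubdiff F x := by
  refine zero_mem_frechetSubdiff_of_le_add_isLittleO
    ((isLittleO_sum_mul_norm_apply_sq c).add hQ.hasFDerivAt.isLittleO_sum_sub_single)
    fun v => ?_
  have hblock' : ∀ i, -(c i / 2 * ‖v i‖ ^ 2) - (Q (x + single 2 i (v i)) - Q x) ≤
      ∑ j, h j ((x + single 2 i (v i)) j) - ∑ j, h j (x j) := fun i => by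
    have := hblock i (v i)
    rw [hF, hF] at this
    linarith
  have hsum := Finset.sum_le_sum fun i (_ : i ∈ Finset.univ) => hblock' i
  rw [← sum_apply_sub_eq_sum_sum_single_apply_sub] at hsum
  simp only [Finset.sum_sub_distrib, Finset.sum_neg_distrib] at hsum
  simp only [hF, Finset.sum_sub_distrib]
  linarith

/-- A blockwise prox-minimizer of `F = Q + Σᵢ hᵢ`, with `Q` smooth and the
`hᵢ` block-separable, is a stationary point: `0 ∈ ∂_F F(X*)`. -/
theorem stmt_15 {N : ℕ} {d : Fin N → ℕ}
    (F : PiLp 2 (fun i : Fin N => EuclideanSpace ℝ (Fin (d i))) → ℝ)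
    (Q : PiLp 2 (fun i : Fin N => EuclideanSpace ℝ (Fin (d i))) → ℝ)
    (h : ∀ i : Fin N, EuclideanSpace ℝ (Fin (d i)) → ℝ)
    (hQ : ContDiff ℝ 1 Q)
    (hF : ∀ x, F x = Q x + ∑ i, h i (x i))
    (Xstar : PiLp 2 (fun i : Fin N => EuclideanSpace ℝ (Fin (d i))))
    (hblock : ∀ i : Fin N, ∃ c : ℝ, 0 ≤ c ∧
      ∀ δ : PiLp 2 (fun i : Fin N => EuclideanSpace ℝ (Fin (d i))),
        (∀ j, j ≠ i → δ j = 0) → F Xstar ≤ F (Xstar + δ) + c / 2 * ‖δ‖ ^ 2) :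
    (0 : PiLp 2 (fun i : Fin N => EuclideanSpace ℝ (Fin (d i)))) ∈
      frechetSubdiff F Xstar := by
  choose c _ hc using hblock
  refine zero_mem_frechetSubdiff_of_blockwise_le (c := c) (hQ.differentiable one_ne_zero Xstar)
    hF fun i b => ?_
  simpa [PiLp.norm_single] using hc i (PiLp.single 2 i b) fun j hj => PiLp.single_eq_of_ne 2 hj _
end
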